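/- arXiv:2112.12288 — 4 statements merged into one kernel-verified Lean document; each statement's English description precedes it below -/
import Mathlib

section
/- Let S be a nonempty set, U a finite nonempty set, f : S × U → S a transition map, l, g : S → ℝ bounded functions, and γ ∈ [0,1). Define the operator B_γ on bounded functions V : S → ℝ by B_γ[V](s) = γ·max{ g(s), min{ l(s), min_{u∈U} V(f(s,u)) } } + (1−γ)·max{ l(s), g(s) }. Then B_γ is a γ-contraction with respect to the supremum norm: for all bounded V, Ṽ, sup_{s∈S} |B_γ[V](s) − B_γ[Ṽ](s)| ≤ γ · sup_{s∈S} |V(s) − Ṽ(s)|. -/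
/-- A real-valued function is bounded. -/
def IsBdd {S : Type*} (V : S → ℝ) : Prop := ∃ C, ∀ s, |V s| ≤ C

/-- The discounted reach-avoid Bellman operator. -/
noncomputable def RABackup {S U : Type*} [Fintype U] (f : S → U → S) (l g : S → ℝ)
    (γ : ℝ) (V : S → ℝ) (s : S) : ℝ :=
  γ * max (g s) (min (l s) (⨅ u, V (f s u))) + (1 - γ) * max (l s) (g s)

lemma infDiff_le_aux {U : Type*} [Fintype U] [Nonempty U] (a b : U → ℝ) (D : ℝ)
    (h : ∀ u, a u - b u ≤ D) : (⨅ u, a u) - ⨅ u, b u ≤ D := by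
  obtain ⟨u0, hu0⟩ := Finite.exists_min b
  have h1 : (⨅ u, a u) ≤ a u0 := ciInf_le (Set.finite_range a).bddBelow u0
  have h2 : b u0 ≤ ⨅ u, b u := le_ciInf hu0
  have := h u0
  linarith

lemma infDiff_le {U : Type*} [Fintype U] [Nonempty U] (a b : U → ℝ) (D : ℝ)
    (h : ∀ u, |a u - b u| ≤ D) : |(⨅ u, a u) - ⨅ u, b u| ≤ D := by
  rw [abs_sub_le_iff]
  exact ⟨infDiff_le_aux a b D fun u => (abs_sub_le_iff.1 (h u)).1,
    infDiff_le_aux b a D fun u => (abs_sub_le_iff.1 (h u)).2⟩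

theorem RABackup_contraction {S U : Type*} [Nonempty S] [Fintype U] [Nonempty U]
    (f : S → U → S) (l g : S → ℝ) (hl : IsBdd l) (hg : IsBdd g)
    (γ : ℝ) (hγ : γ ∈ Set.Ico (0 : ℝ) 1)
    (V W : S → ℝ) (hV : IsBdd V) (hW : IsBdd W) :
    (⨆ s, |RABackup f l g γ V s - RABackup f l g γ W s|) ≤
      γ * ⨆ s, |V s - W s| := by
  obtain ⟨hγ0, hγ1⟩ := hγ
  obtain ⟨CV, hCV⟩ := hV
  obtain ⟨CW, hCW⟩ := hW
  have hBdd : BddAbove (Set.range fun s => |V s - W s|) := by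
    refine ⟨CV + CW, ?_⟩
    rintro _ ⟨x, rfl⟩
    calc |V x - W x| ≤ |V x| + |W x| := abs_sub _ _
      _ ≤ CV + CW := add_le_add (hCV x) (hCW x)
  set D := ⨆ s, |V s - W s| with hD
  have hle : ∀ x, |V x - W x| ≤ D := fun x => le_ciSup hBdd x
  apply ciSup_le
  intro s
  have keq : RABackup f l g γ V s - RABackup f l g γ W s =
      γ * (max (g s) (min (l s) (⨅ u, V (f s u))) -
        max (g s) (min (l s) (⨅ u, W (f s u)))) := by
    unfold RABackup; ring
  rw [keq, abs_mul, abs_of_nonneg hγ0]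
  refine mul_le_mul_of_nonneg_left ?_ hγ0
  have hinf : |(⨅ u, V (f s u)) - ⨅ u, W (f s u)| ≤ D :=
    infDiff_le (fun u => V (f s u)) (fun u => W (f s u)) D (fun u => hle (f s u))
  calc |max (g s) (min (l s) (⨅ u, V (f s u))) -
        max (g s) (min (l s) (⨅ u, W (f s u)))|
      ≤ max |g s - g s| |min (l s) (⨅ u, V (f s u)) - min (l s) (⨅ u, W (f s u))| :=
        abs_max_sub_max_le_max _ _ _ _
    _ = |min (l s) (⨅ u, V (f s u)) - min (l s) (⨅ u, W (f s u))| := by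
        rw [sub_self, abs_zero, max_eq_right (abs_nonneg _)]
    _ ≤ max |l s - l s| |(⨅ u, V (f s u)) - ⨅ u, W (f s u)| :=
        abs_min_sub_min_le_max _ _ _ _
    _ = |(⨅ u, V (f s u)) - ⨅ u, W (f s u)| := by
        rw [sub_self, abs_zero, max_eq_right (abs_nonneg _)]
    _ ≤ D := hinf
end

section
/- Let S be a nonempty set, U a finite nonempty set, f : S × U → S, and l, g : S → ℝ bounded. For each γ ∈ [0,1), the discounted reach-avoid Bellman operator B_γ[V](s) = γ·max{ g(s), min{ l(s), min_{u∈U} V(f(s,u)) } } + (1−γ)·max{ l(s), g(s) } has a unique fixed point V_γ in the space of bounded real-valued functions on S. -/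
/-!
Bounded functions on `S` are exactly the elements of `ℓ^∞(S)`, a complete metric space. The
minimum over a finite set, `max` and `min` with a fixed number are all `1`-Lipschitz, so
`RABackup f l g γ` is a `γ`-contraction for the sup distance, and the Banach fixed-point theorem
gives the unique bounded fixed point.
-/

open scoped ENNReal

theorem abs_ciInf_sub_ciInf_le {ι : Type*} [Finite ι] [Nonempty ι] {a b : ι → ℝ} {c : ℝ}
    (h : ∀ i, |a i - b i| ≤ c) : |(⨅ i, a i) - ⨅ i, b i| ≤ c := by
  have key : ∀ a b : ι → ℝ, (∀ i, a i ≤ b i + c) → (⨅ i, a i) - ⨅ i, b i ≤ c := fun a b h =>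
    sub_le_comm.1 <| le_ciInf fun i => by linarith [Finite.ciInf_le a i, h i]
  refine abs_sub_le_iff.2 ⟨key a b fun i => ?_, key b a fun i => ?_⟩
  · linarith [(abs_sub_le_iff.1 (h i)).1]
  · linarith [(abs_sub_le_iff.1 (h i)).2]

namespace IsBdd

variable {S : Type*} {V W : S → ℝ}

theorem add (hV : IsBdd V) (hW : IsBdd W) : IsBdd fun s => V s + W s := by
  obtain ⟨C, hC⟩ := hV
  obtain ⟨D, hD⟩ := hW
  exact ⟨C + D, fun s => (abs_add_le _ _).trans (add_le_add (hC s) (hD s))⟩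

theorem const_mul (hV : IsBdd V) (a : ℝ) : IsBdd fun s => a * V s := by
  obtain ⟨C, hC⟩ := hV
  exact ⟨|a| * C, fun s => by rw [abs_mul]; exact mul_le_mul_of_nonneg_left (hC s) (abs_nonneg a)⟩

theorem max (hV : IsBdd V) (hW : IsBdd W) : IsBdd fun s => max (V s) (W s) := by
  obtain ⟨C, hC⟩ := hV
  obtain ⟨D, hD⟩ := hW
  exact ⟨Max.max C D, fun s => abs_max_le_max_abs_abs.trans (max_le_max (hC s) (hD s))⟩

theorem min (hV : IsBdd V) (hW : IsBdd W) : IsBdd fun s => min (V s) (W s) := by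
  obtain ⟨C, hC⟩ := hV
  obtain ⟨D, hD⟩ := hW
  exact ⟨Max.max C D, fun s => abs_min_le_max_abs_abs.trans (max_le_max (hC s) (hD s))⟩

theorem ciInf_comp {T U : Type*} [Finite U] [Nonempty U] {V : T → ℝ} (hV : IsBdd V)
    (f : S → U → T) : IsBdd fun s => ⨅ u, V (f s u) := by
  obtain ⟨C, hC⟩ := hV
  refine ⟨C, fun s => ?_⟩
  simpa using abs_ciInf_sub_ciInf_le (b := 0) fun u => by simpa using hC (f s u)

end IsBdd

theorem isBdd_iff_memℓp_infty {S : Type*} {V : S → ℝ} : IsBdd V ↔ Memℓp V ∞ := by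
  simp only [memℓp_infty_iff, Real.norm_eq_abs, bddAbove_def, Set.forall_mem_range, IsBdd]

theorem existsUnique_isBdd_fixedPoint_of_contraction {S : Type*} {T : (S → ℝ) → S → ℝ} {γ : ℝ}
    (hγ : γ ∈ Set.Ico (0 : ℝ) 1) (hT : ∀ V, IsBdd V → IsBdd (T V))
    (hT_contr : ∀ V W c, (∀ s, |V s - W s| ≤ c) → ∀ s, |T V s - T W s| ≤ γ * c) :
    ∃! V : {V : S → ℝ // IsBdd V}, ∀ s, T V.1 s = V.1 s := by
  let e : {V : S → ℝ // IsBdd V} ≃ lp (fun _ : S => ℝ) ∞ :=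
    Equiv.subtypeEquivRight fun _ => isBdd_iff_memℓp_infty
  let T' : lp (fun _ : S => ℝ) ∞ → lp (fun _ : S => ℝ) ∞ := fun V => e ⟨T V, hT V (e.symm V).2⟩
  have hT' : ContractingWith ⟨γ, hγ.1⟩ T' := by
    refine ⟨hγ.2, LipschitzWith.of_dist_le_mul fun V W => ?_⟩
    rw [dist_eq_norm, dist_eq_norm]
    refine lp.norm_le_of_forall_le (mul_nonneg hγ.1 (norm_nonneg _)) fun s => ?_
    have := lp.norm_apply_le_norm ENNReal.top_ne_zero (V - W)
    simp only [lp.coeFn_sub, Pi.sub_apply, Real.norm_eq_abs] at this ⊢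
    exact hT_contr V W _ this s
  refine (e.existsUnique_congr fun V => ?_).2
    ⟨_, hT'.fixedPoint_isFixedPt, fun _ hx => hT'.fixedPoint_unique hx⟩
  simp only [Function.IsFixedPt, T', e.apply_eq_iff_eq, Subtype.ext_iff, funext_iff]
  rfl

section RABackup

variable {S U : Type*} [Fintype U] [Nonempty U] (f : S → U → S) {l g : S → ℝ}

theorem isBdd_RABackup (hl : IsBdd l) (hg : IsBdd g) (γ : ℝ) {V : S → ℝ} (hV : IsBdd V) :
    IsBdd (RABackup f l g γ V) :=
  ((hg.max (hl.min (hV.ciInf_comp f))).const_mul γ).add ((hl.max hg).const_mul (1 - γ))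

theorem abs_RABackup_sub_RABackup_le {γ : ℝ} (hγ : 0 ≤ γ) {V W : S → ℝ} {c : ℝ}
    (h : ∀ s, |V s - W s| ≤ c) (s : S) :
    |RABackup f l g γ V s - RABackup f l g γ W s| ≤ γ * c := by
  have hinf : |(⨅ u, V (f s u)) - ⨅ u, W (f s u)| ≤ c := abs_ciInf_sub_ciInf_le fun u => h _
  have hmax :
      |max (g s) (min (l s) (⨅ u, V (f s u))) - max (g s) (min (l s) (⨅ u, W (f s u)))| ≤ c := by
    have hc : 0 ≤ c := (abs_nonneg _).trans hinf
    refine (abs_max_sub_max_le_max _ _ _ _).trans (max_le (by simpa using hc) ?_)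
    exact (abs_min_sub_min_le_max _ _ _ _).trans (max_le (by simpa using hc) hinf)
  calc |RABackup f l g γ V s - RABackup f l g γ W s|
      = γ * |max (g s) (min (l s) (⨅ u, V (f s u))) - max (g s) (min (l s) (⨅ u, W (f s u)))| := by
        rw [RABackup, RABackup, add_sub_add_right_eq_sub, ← mul_sub, abs_mul, abs_of_nonneg hγ]
    _ ≤ γ * c := mul_le_mul_of_nonneg_left hmax hγ

end RABackup

theorem RABackup_existsUnique_fixedPoint_general {S U : Type*} [Fintype U] [Nonempty U]
    (f : S → U → S) (l g : S → ℝ) (hl : IsBdd l) (hg : IsBdd g)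
    (γ : ℝ) (hγ : γ ∈ Set.Ico (0 : ℝ) 1) :
    ∃! V : {V : S → ℝ // IsBdd V}, ∀ s, RABackup f l g γ V.1 s = V.1 s :=
  existsUnique_isBdd_fixedPoint_of_contraction hγ (fun _ => isBdd_RABackup f hl hg γ)
    fun _ _ _ h => abs_RABackup_sub_RABackup_le f hγ.1 h

theorem RABackup_existsUnique_fixedPoint {S U : Type*} [Nonempty S] [Fintype U] [Nonempty U]
    (f : S → U → S) (l g : S → ℝ) (hl : IsBdd l) (hg : IsBdd g)
    (γ : ℝ) (hγ : γ ∈ Set.Ico (0 : ℝ) 1) :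
    ∃! V : {V : S → ℝ // IsBdd V}, ∀ s, RABackup f l g γ V.1 s = V.1 s :=
  RABackup_existsUnique_fixedPoint_general f l g hl hg γ hγ
end

section
/- Let S be a nonempty set, U finite nonempty, f : S×U → S, l, g : S → ℝ bounded, and for γ ∈ [0,1) let V_γ be the unique fixed point of the discounted reach-avoid Bellman operator B_γ. If 0 ≤ γ₁ ≤ γ₂ < 1, then V_{γ₁}(s) ≥ V_{γ₂}(s) for all s ∈ S. Consequently the discounted reach-avoid sets RA_γ = { s : V_γ(s) ≤ 0 } are nested: RA_{γ₁} ⊆ RA_{γ₂}. -/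
theorem discounted_fixed_points_nested {S U : Type*} [Nonempty S] [Fintype U] [Nonempty U]
    (f : S → U → S) (l g : S → ℝ) (hl : IsBdd l) (hg : IsBdd g)
    (γ₁ γ₂ : ℝ) (hγ₁ : γ₁ ∈ Set.Ico (0 : ℝ) 1) (hγ₂ : γ₂ ∈ Set.Ico (0 : ℝ) 1)
    (h12 : γ₁ ≤ γ₂)
    (V₁ V₂ : S → ℝ) (hV₁b : IsBdd V₁) (hV₂b : IsBdd V₂)
    (hV₁ : ∀ s, RABackup f l g γ₁ V₁ s = V₁ s)
    (hV₂ : ∀ s, RABackup f l g γ₂ V₂ s = V₂ s) :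
    (∀ s, V₂ s ≤ V₁ s) ∧ {s | V₁ s ≤ 0} ⊆ {s | V₂ s ≤ 0} := by
  obtain ⟨hγ₁0, hγ₁1⟩ := hγ₁
  obtain ⟨hγ₂0, hγ₂1⟩ := hγ₂
  obtain ⟨C₁, hC₁⟩ := hV₁b
  obtain ⟨C₂, hC₂⟩ := hV₂b
  -- sup of V₂ - V₁
  have hbdd : BddAbove (Set.range fun s => V₂ s - V₁ s) := by
    refine ⟨C₂ + C₁, ?_⟩
    rintro x ⟨s, rfl⟩
    dsimp only
    have h1 := abs_le.mp (hC₁ s)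
    have h2 := abs_le.mp (hC₂ s)
    linarith [h1.1, h2.2]
  set d : ℝ := ⨆ s, (V₂ s - V₁ s) with hd
  set d' : ℝ := max d 0 with hd'
  have hd'0 : 0 ≤ d' := le_max_right _ _
  have hle : ∀ s, V₂ s ≤ V₁ s + d' := by
    intro s
    have := le_ciSup hbdd s
    have : V₂ s - V₁ s ≤ d := this
    have : d ≤ d' := le_max_left _ _
    linarith [le_ciSup hbdd s]
  -- step 1: V₂ ≤ B_{γ₁}[V₂]
  have step1 : ∀ s, V₂ s ≤ RABackup f l g γ₁ V₂ s := by
    intro s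
    rw [← hV₂ s]
    unfold RABackup
    set a := max (g s) (min (l s) (⨅ u, V₂ (f s u))) with ha
    set b := max (l s) (g s) with hb
    have hab : a ≤ b := by
      apply max_le (le_max_right _ _)
      exact le_trans (min_le_left _ _) (le_max_left _ _)
    nlinarith [mul_nonneg (sub_nonneg.mpr h12) (sub_nonneg.mpr hab)]
  -- step 2: B_{γ₁}[V₂] ≤ B_{γ₁}[V₁] + γ₁ * d'
  have step2 : ∀ s, RABackup f l g γ₁ V₂ s ≤ V₁ s + γ₁ * d' := by
    intro s
    rw [← hV₁ s]
    unfold RABackup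
    have hibd : BddBelow (Set.range fun u => V₂ (f s u)) :=
      (Set.finite_range _).bddBelow
    have hinf : (⨅ u, V₂ (f s u)) ≤ (⨅ u, V₁ (f s u)) + d' := by
      rw [← sub_le_iff_le_add]
      apply le_ciInf
      intro u
      have h1 : (⨅ u, V₂ (f s u)) ≤ V₂ (f s u) := ciInf_le hibd u
      have h2 := hle (f s u)
      linarith
    have hmin : min (l s) (⨅ u, V₂ (f s u)) ≤ min (l s) (⨅ u, V₁ (f s u)) + d' := by
      calc min (l s) (⨅ u, V₂ (f s u))
          ≤ min (l s + d') ((⨅ u, V₁ (f s u)) + d') :=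
            min_le_min (le_add_of_nonneg_right hd'0) hinf
        _ = min (l s) (⨅ u, V₁ (f s u)) + d' := min_add_add_right _ _ _
    have hmax : max (g s) (min (l s) (⨅ u, V₂ (f s u)))
        ≤ max (g s) (min (l s) (⨅ u, V₁ (f s u))) + d' := by
      calc max (g s) (min (l s) (⨅ u, V₂ (f s u)))
          ≤ max (g s + d') (min (l s) (⨅ u, V₁ (f s u)) + d') :=
            max_le_max (le_add_of_nonneg_right hd'0) hmin
        _ = _ + d' := max_add_add_right _ _ _
    nlinarith [mul_le_mul_of_nonneg_left hmax hγ₁0]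
  -- conclude d' ≤ γ₁ d'
  have hkey : ∀ s, V₂ s ≤ V₁ s + γ₁ * d' := fun s => le_trans (step1 s) (step2 s)
  have hdle : d ≤ γ₁ * d' := ciSup_le fun s => by linarith [hkey s]
  have hd'le : d' ≤ γ₁ * d' := by
    apply max_le hdle
    exact mul_nonneg hγ₁0 hd'0
  have hd'z : d' = 0 := by nlinarith
  have hmain : ∀ s, V₂ s ≤ V₁ s := fun s => by
    have := hkey s; rw [hd'z] at this; linarith
  exact ⟨hmain, fun s hs => le_trans (hmain s) hs⟩
end

section
/- The map γ ↦ V_γ(s) is monotone nonincreasing in γ on [0,1) for each fixed state s, where V_γ is the unique fixed point of the discounted reach-avoid Bellman operator B_γ; hence lim_{γ→1⁻} V_γ(s) exists (possibly as an infimum) and equals inf_{γ∈[0,1)} V_γ(s). -/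
theorem discounted_value_antitone_and_tendsto_iInf {S U : Type*}
    [Nonempty S] [Fintype U] [Nonempty U]
    (f : S → U → S) (l g : S → ℝ) (hl : IsBdd l) (hg : IsBdd g)
    (V : ℝ → S → ℝ)
    (hbdd : ∃ C, ∀ γ ∈ Set.Ico (0 : ℝ) 1, ∀ s, |V γ s| ≤ C)
    (hfix : ∀ γ ∈ Set.Ico (0 : ℝ) 1, ∀ s, RABackup f l g γ (V γ) s = V γ s) :
    (∀ γ₁ ∈ Set.Ico (0 : ℝ) 1, ∀ γ₂ ∈ Set.Ico (0 : ℝ) 1, γ₁ ≤ γ₂ →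
      ∀ s, V γ₂ s ≤ V γ₁ s) ∧
    ∀ s, Filter.Tendsto (fun γ => V γ s) (nhdsWithin 1 (Set.Ico (0 : ℝ) 1))
      (nhds (⨅ γ : Set.Ico (0 : ℝ) 1, V γ s)) := by
  obtain ⟨C, hC⟩ := hbdd
  have mono : ∀ γ₁ ∈ Set.Ico (0 : ℝ) 1, ∀ γ₂ ∈ Set.Ico (0 : ℝ) 1, γ₁ ≤ γ₂ →
      ∀ s, V γ₂ s ≤ V γ₁ s := by
    intro γ₁ h1 γ₂ h2 hle s
    set D := sSup (Set.range fun t => V γ₂ t - V γ₁ t) with hD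
    have hne : (Set.range fun t => V γ₂ t - V γ₁ t).Nonempty := Set.range_nonempty _
    have hbd : BddAbove (Set.range fun t => V γ₂ t - V γ₁ t) := by
      refine ⟨2 * C, ?_⟩
      rintro x ⟨t, rfl⟩
      have a1 := abs_le.1 (hC γ₂ h2 t)
      have a2 := abs_le.1 (hC γ₁ h1 t)
      simp only []
      linarith [a1.2, a2.1]
    set m := max D 0 with hm
    have hm0 : 0 ≤ m := le_max_right _ _
    have key : ∀ t, V γ₂ t - V γ₁ t ≤ γ₁ * m := by
      intro t
      set x₂ := ⨅ u, V γ₂ (f t u) with hx2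
      set x₁ := ⨅ u, V γ₁ (f t u) with hx1
      set A₂ := max (g t) (min (l t) x₂) with hA2
      set A₁ := max (g t) (min (l t) x₁) with hA1
      set M := max (l t) (g t) with hM
      have hbb2 : BddBelow (Set.range fun u => V γ₂ (f t u)) :=
        (Set.finite_range _).bddBelow
      have hinf : x₂ ≤ x₁ + m := by
        obtain ⟨u₀, hu₀⟩ := Finite.exists_min (fun u => V γ₁ (f t u))
        have hx1eq : x₁ = V γ₁ (f t u₀) := by
          refine le_antisymm (ciInf_le (Set.finite_range _).bddBelow u₀) ?_
          exact le_ciInf hu₀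
        have h2' : V γ₂ (f t u₀) - V γ₁ (f t u₀) ≤ D := le_csSup hbd ⟨f t u₀, rfl⟩
        have : x₂ ≤ V γ₂ (f t u₀) := ciInf_le hbb2 u₀
        have hDm : D ≤ m := le_max_left _ _
        linarith
      have hA21 : A₂ ≤ A₁ + m := by
        have h1' : min (l t) x₂ ≤ min (l t) x₁ + m := by
          rcases le_total (l t) x₁ with h | h
          · calc min (l t) x₂ ≤ l t := min_le_left _ _
              _ ≤ min (l t) x₁ + m := by rw [min_eq_left h]; linarith
          · calc min (l t) x₂ ≤ x₂ := min_le_right _ _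
              _ ≤ x₁ + m := hinf
              _ = min (l t) x₁ + m := by rw [min_eq_right h]
        have : A₂ ≤ max (g t + m) (min (l t) x₁ + m) :=
          max_le (by linarith [le_max_left (g t + m) (min (l t) x₁ + m)])
            (le_trans h1' (le_max_right _ _))
        calc A₂ ≤ max (g t + m) (min (l t) x₁ + m) := this
          _ = A₁ + m := (max_add_add_right _ _ _)
      have hA2M : A₂ ≤ M := by
        refine max_le (le_max_right _ _) (le_trans (min_le_left _ _) (le_max_left _ _))
      have expand : V γ₂ t - V γ₁ t = γ₁ * (A₂ - A₁) + (γ₂ - γ₁) * (A₂ - M) := by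
        rw [← hfix γ₂ h2 t, ← hfix γ₁ h1 t]
        simp only [RABackup, ← hx2, ← hx1, ← hA2, ← hA1, ← hM]
        ring
      have t1 : γ₁ * (A₂ - A₁) ≤ γ₁ * m :=
        mul_le_mul_of_nonneg_left (by linarith) h1.1
      have t2 : (γ₂ - γ₁) * (A₂ - M) ≤ 0 :=
        mul_nonpos_of_nonneg_of_nonpos (by linarith) (by linarith)
      linarith [expand ▸ (by linarith : γ₁ * (A₂ - A₁) + (γ₂ - γ₁) * (A₂ - M) ≤ γ₁ * m)]
    have hDle : D ≤ γ₁ * m := by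
      apply csSup_le hne
      rintro x ⟨t, rfl⟩
      exact key t
    have hD0 : D ≤ 0 := by
      by_contra h
      push_neg at h
      have hmD : m = D := max_eq_left h.le
      rw [hmD] at hDle
      nlinarith [h1.2, h1.1]
    have : V γ₂ s - V γ₁ s ≤ D := le_csSup hbd ⟨s, rfl⟩
    linarith
  refine ⟨mono, fun s => ?_⟩
  set L := ⨅ γ : Set.Ico (0 : ℝ) 1, V γ s with hL
  have hbbL : BddBelow (Set.range fun γ : Set.Ico (0 : ℝ) 1 => V γ s) := by
    refine ⟨-C, ?_⟩
    rintro x ⟨γ, rfl⟩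
    have := abs_le.1 (hC γ γ.2 s)
    linarith [this.1]
  rw [tendsto_order]
  constructor
  · intro a ha
    filter_upwards [self_mem_nhdsWithin] with γ hγ
    have : L ≤ V γ s := ciInf_le hbbL ⟨γ, hγ⟩
    linarith
  · intro b hb
    obtain ⟨γ₀, hγ₀⟩ := exists_lt_of_ciInf_lt hb
    have hmem : Set.Ioi (γ₀ : ℝ) ∈ nhds (1 : ℝ) := Ioi_mem_nhds γ₀.2.2
    filter_upwards [mem_nhdsWithin_of_mem_nhds hmem, self_mem_nhdsWithin] with γ hγ1 hγ2
    have := mono γ₀ γ₀.2 γ hγ2 (le_of_lt hγ1) s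
    linarith
end
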